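/- For every positive integer n, N(I,n) = Σ_{i=0}^{α_t} b_i(I) · C(n−1, i), where C(n−1,i) is the binomial coefficient. -/

import Mathlib

open Finset

/-- Sequences of length `ℓ` (positions `1..ℓ`) with entries in `{1,…,n}`,
encoded as functions `ℕ → ℕ` vanishing outside `[1, ℓ]`. -/
def Seqs (ℓ n : ℕ) : Set (ℕ → ℕ) :=
  {v | (∀ i ∈ Finset.Icc 1 ℓ, v i ∈ Finset.Icc 1 n) ∧ ∀ i, i ∉ Finset.Icc 1 ℓ → v i = 0}

/-- Descent set of a sequence of length `ℓ`:
`Des(v) = {i ∈ {1,…,ℓ-1} : v_i > v_{i+1}}`. -/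
def Des (ℓ : ℕ) (v : ℕ → ℕ) : Set ℕ :=
  {i | 1 ≤ i ∧ i < ℓ ∧ v (i + 1) < v i}

/-- Number of occurrences of the value `j` among positions `1..ℓ` of `v`. -/
def mult (ℓ : ℕ) (v : ℕ → ℕ) (j : ℕ) : ℕ :=
  ((Finset.Icc 1 ℓ).filter fun i => v i = j).card

/-- `𝔡^m(I, n)`: the number of sequences of length `n*m`, in which each of `1,…,n`
appears exactly `m` times, whose descent set is `I`. -/
noncomputable def dP (m : ℕ) (I : Finset ℕ) (n : ℕ) : ℕ :=
  Set.ncard {w ∈ Seqs (n * m) n |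
    Des (n * m) w = ↑I ∧ ∀ j ∈ Finset.Icc 1 n, mult (n * m) w j = m}

/-- `N(I, n)`: the number of sequences `v = (v_1, …, v_{α_t})` with entries in `{1,…,n}`
such that `Des v = I \ {α_t}` and `v_{α_t} ≠ 1`. -/
noncomputable def Ncount (I : Finset ℕ) (n : ℕ) : ℕ :=
  Set.ncard {v ∈ Seqs (I.sup id) n |
    Des (I.sup id) v = ↑(I.erase (I.sup id)) ∧ v (I.sup id) ≠ 1}

/-- `D^m(I, n)`: the number of sequences `v = (v_1, …, v_{α_t})` with entries in `{1,…,n}`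
such that `Des v = I \ {α_t}` and each of `1,…,n` appears at most `m` times in `v`. -/
noncomputable def Dcount (m : ℕ) (I : Finset ℕ) (n : ℕ) : ℕ :=
  Set.ncard {v ∈ Seqs (I.sup id) n |
    Des (I.sup id) v = ↑(I.erase (I.sup id)) ∧ ∀ j ∈ Finset.Icc 1 n, mult (I.sup id) v j ≤ m}

/-- `b_i(I)`: the number of sequences `v = (v_1, …, v_{α_t})` with entries in `{1,…,i+1}`
such that `Des v = I \ {α_t}`, every number in `{2,…,i+1}` occurs in `v`, and `v_{α_t} ≠ 1`. -/
noncomputable def bcoef (I : Finset ℕ) (i : ℕ) : ℕ :=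
  Set.ncard {v ∈ Seqs (I.sup id) (i + 1) |
    Des (I.sup id) v = ↑(I.erase (I.sup id)) ∧
    (∀ l ∈ Finset.Icc 2 (i + 1), ∃ j ∈ Finset.Icc 1 (I.sup id), v j = l) ∧
    v (I.sup id) ≠ 1}

/-- `L(I)`: the length of the longest run of consecutive integers contained in `I`. -/
def longestRun (I : Finset ℕ) : ℕ :=
  I.sup fun a => ((Finset.Icc a (I.sup id)).filter fun b => Finset.Icc a b ⊆ I).card

/-- `alphaVal I k` is the `k`-th smallest element of `I` (`1`-indexed), with `alphaVal I 0 = 0`. -/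
def alphaVal (I : Finset ℕ) (k : ℕ) : ℕ :=
  if k = 0 then 0 else (I.sort (· ≤ ·)).getD (k - 1) 0

/-- For a composition `A = (a_1,…,a_s)` of `t = |I|`, `sigmaC I A i` is
`σ_{i+1} = β_{a_1+⋯+a_i+1} + ⋯ + β_{a_1+⋯+a_{i+1}}`, where `β` is the sequence of first
differences of `(0, α_1, …, α_t)`; by telescoping this equals
`α_{a_1+⋯+a_{i+1}} - α_{a_1+⋯+a_i}`. -/
def sigmaC (I : Finset ℕ) {t : ℕ} (A : Composition t) (i : ℕ) : ℕ :=
  alphaVal I (A.sizeUpTo (i + 1)) - alphaVal I (A.sizeUpTo i)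

/-- `C(A, I)` for a composition `A = (a_1,…,a_r)`: the number of sequences
`v = (v_1, …, v_{α_t})` with entries in `{1,…,r}` such that `Des v = I \ {α_t}`
and the number `j` appears exactly `a_j` times in `v`, for each `j ∈ {1,…,r}`. -/
noncomputable def Ccount (I : Finset ℕ) {N : ℕ} (A : Composition N) : ℕ :=
  Set.ncard {v ∈ Seqs (I.sup id) A.length |
    Des (I.sup id) v = ↑(I.erase (I.sup id)) ∧
    ∀ j ∈ Finset.Icc 1 A.length, mult (I.sup id) v j = A.blocks.getD (j - 1) 0}

/-- The generalized binomial coefficient `C(a, i) = a(a-1)⋯(a-i+1)/i!` for an integer `a`. -/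
def genChoose (a : ℤ) (i : ℕ) : ℚ :=
  (∏ j ∈ Finset.range i, ((a : ℚ) - (j : ℚ))) / (Nat.factorial i)

/-!
Split the sequences counted by `N(I, n)` according to the set `S ⊆ {2, …, n}` of their entries
other than `1`. Relabelling `{1} ∪ S` increasingly onto `{1, …, |S| + 1}` is strictly monotone,
so it preserves descents, fixes `1`, and turns the sequences with entry set `S` bijectively into
those counted by `b_{|S|}(I)`. Hence `N(I, n) = ∑_{S ⊆ {2,…,n}} b_{|S|}(I) = ∑_i b_i(I) C(n-1, i)`,
and the sum may be cut at `α_t` because a sequence of length `α_t` takes at most `α_t` values.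
-/

theorem Set.BijOn.comp_left {ι α β : Type*} {g : α → β} {s : Set α} {t : Set β}
    (h : Set.BijOn g s t) :
    Set.BijOn (fun v : ι → α => g ∘ v) (Set.univ.pi fun _ => s) (Set.univ.pi fun _ => t) := by
  refine ⟨fun v hv i _ => h.mapsTo (hv i trivial),
    fun v hv w hw hvw => funext fun i => h.injOn (hv i trivial) (hw i trivial) (congrFun hvw i),
    fun w hw => ?_⟩
  choose v hv hvw using fun i => h.surjOn (hw i trivial)
  exact ⟨v, fun i _ => hv i, funext hvw⟩

theorem Set.ncard_eq_sum_ncard_fiberwise {α β : Type*} [DecidableEq β] {s : Set α}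
    (hs : s.Finite) {t : Finset β} {f : α → β} (hf : ∀ x ∈ s, f x ∈ t) :
    s.ncard = ∑ b ∈ t, {x ∈ s | f x = b}.ncard := by
  rw [Set.ncard_eq_toFinset_card s hs,
    Finset.card_eq_sum_card_fiberwise fun x hx => hf x (hs.mem_toFinset.1 hx)]
  refine Finset.sum_congr rfl fun b _ => ?_
  rw [← Set.ncard_coe_finset, Finset.coe_filter]
  simp only [Set.Finite.mem_toFinset]

theorem Finset.sum_range_eq_sum_range_of_eq_zero {M : Type*} [AddCommMonoid M] {f : ℕ → M}
    {a b : ℕ} (ha : ∀ i, a ≤ i → f i = 0) (hb : ∀ i, b ≤ i → f i = 0) :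
    ∑ i ∈ range a, f i = ∑ i ∈ range b, f i := by
  wlog hab : a ≤ b generalizing a b
  · exact (this hb ha (by omega)).symm
  exact Finset.sum_subset (range_subset_range.2 hab) fun i _ hi => ha i (by simpa using hi)

theorem Seqs_finite (ℓ n : ℕ) : (Seqs ℓ n).Finite := by
  refine (Set.finite_range fun f : Icc 1 ℓ → Icc 1 n =>
    fun i => if h : i ∈ Icc 1 ℓ then (f ⟨i, h⟩ : ℕ) else 0).subset ?_
  rintro v ⟨hv, hv0⟩
  refine ⟨fun i => ⟨v i, hv i i.2⟩, funext fun i => ?_⟩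
  by_cases h : i ∈ Icc 1 ℓ
  · simp [h]
  · simp [h, hv0 i h]

theorem mem_Seqs_iff_of_le {ℓ n : ℕ} {v : ℕ → ℕ} (hv : ∀ j, v j ≤ n) :
    v ∈ Seqs ℓ n ↔ ∀ j, v j = 0 ↔ j ∉ Icc 1 ℓ := by
  simp only [Seqs, Set.mem_ofPred_eq, mem_Icc]
  constructor
  · rintro ⟨hpos, hzero⟩ j
    by_cases hj : 1 ≤ j ∧ j ≤ ℓ
    · have := hpos j hj
      omega
    · simp [hj, hzero j hj]
  · intro h
    refine ⟨fun j hj => ⟨?_, hv j⟩, fun j hj => (h j).2 hj⟩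
    have := mt (h j).1
    omega

theorem Des_comp_of_strictMonoOn {f : ℕ → ℕ} {s : Set ℕ} (hf : StrictMonoOn f s) {ℓ : ℕ}
    {v : ℕ → ℕ} (hv : ∀ j ∈ Icc 1 ℓ, v j ∈ s) : Des ℓ (f ∘ v) = Des ℓ v := by
  ext k
  simp only [Des, Set.mem_ofPred_eq, Function.comp_apply, and_congr_right_iff]
  intro hk hkℓ
  exact hf.lt_iff_lt (hv _ (mem_Icc.2 ⟨by omega, by omega⟩)) (hv _ (mem_Icc.2 ⟨hk, hkℓ.le⟩))

def rankIn (U : Finset ℕ) (x : ℕ) : ℕ := #{y ∈ U | y ≤ x}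

theorem rankIn_strictMonoOn (U : Finset ℕ) : StrictMonoOn (rankIn U) ↑(insert 0 U) := by
  intro x _ y hy hxy
  have hyU : y ∈ U := by
    rcases mem_insert.1 hy with rfl | hy
    · omega
    · exact hy
  refine card_lt_card ((ssubset_iff_of_subset ?_).2 ⟨y, ?_, ?_⟩)
  · exact monotone_filter_right U fun z _ (hz : z ≤ x) => hz.trans hxy.le
  · simp [hyU]
  · simp [hxy]

theorem rankIn_bijOn (U : Finset ℕ) : Set.BijOn (rankIn U) U ↑(Icc 1 #U) := by
  have hinj : Set.InjOn (rankIn U) U :=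
    (rankIn_strictMonoOn U).injOn.mono (by simp [Set.subset_insert])
  have hmaps : Set.MapsTo (rankIn U) U ↑(Icc 1 #U) := fun x hx =>
    mem_Icc.2 ⟨card_pos.2 ⟨x, by simpa using hx⟩, card_filter_le _ _⟩
  refine ⟨hmaps, hinj, ?_⟩
  have himage : U.image (rankIn U) = Icc 1 #U :=
    eq_of_subset_of_card_le (image_subset_iff.2 hmaps)
      (by rw [card_image_of_injOn hinj, Nat.card_Icc, Nat.add_sub_cancel])
  rw [Set.SurjOn, ← himage, coe_image]

theorem rankIn_zero {U : Finset ℕ} (h : 0 ∉ U) : rankIn U 0 = 0 := by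
  simp only [rankIn, card_eq_zero, filter_eq_empty_iff, nonpos_iff_eq_zero]
  rintro y hy rfl
  exact h hy

theorem rankIn_insert_one_zero {S : Finset ℕ} (hS : ∀ x ∈ S, 2 ≤ x) :
    rankIn (insert 1 S) 0 = 0 :=
  rankIn_zero fun h => by
    rcases mem_insert.1 h with h | h
    · omega
    · exact absurd (hS 0 h) (by omega)

theorem rankIn_insert_one_one {S : Finset ℕ} (hS : ∀ x ∈ S, 2 ≤ x) :
    rankIn (insert 1 S) 1 = 1 := by
  rw [rankIn, card_eq_one]
  refine ⟨1, eq_singleton_iff_unique_mem.2 ⟨by simp, fun y hy => ?_⟩⟩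
  simp only [mem_filter, mem_insert] at hy
  rcases hy with ⟨rfl | hy, hy1⟩
  · rfl
  · have := hS y hy
    omega

section Relabel

variable {n : ℕ} {S : Finset ℕ}

theorem bijOn_rankIn_insert_one (hS : ∀ x ∈ S, 2 ≤ x) :
    Set.BijOn (rankIn (insert 1 S)) S ↑(Icc 2 (#S + 1)) := by
  have h1S : 1 ∉ S := fun h => by simpa using hS 1 h
  have hg1 := rankIn_insert_one_one hS
  have hIcc : insert 1 (Icc 2 (#S + 1)) = Icc 1 #(insert 1 S) := by
    ext
    simp only [mem_insert, mem_Icc, card_insert_of_notMem h1S]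
    omega
  refine (Set.BijOn.insert_iff h1S (by simp [hg1])).1 ?_
  rw [hg1, ← coe_insert, ← coe_insert, hIcc]
  exact rankIn_bijOn _

theorem bijOn_rankIn_insert_zero_insert_one (hS : ∀ x ∈ S, 2 ≤ x) :
    Set.BijOn (rankIn (insert 1 S)) ↑(insert 0 (insert 1 S)) ↑(insert 0 (Icc 1 (#S + 1))) := by
  have h1S : 1 ∉ S := fun h => by simpa using hS 1 h
  have h := (rankIn_bijOn (insert 1 S)).insert (a := 0) (by rw [rankIn_insert_one_zero hS]; simp)
  rwa [rankIn_insert_one_zero hS, card_insert_of_notMem h1S, ← coe_insert, ← coe_insert] at h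

def largeValues (ℓ : ℕ) (v : ℕ → ℕ) : Finset ℕ := {x ∈ (Icc 1 ℓ).image v | 2 ≤ x}

theorem largeValues_subset {ℓ : ℕ} {v : ℕ → ℕ} (hv : v ∈ Seqs ℓ n) :
    largeValues ℓ v ⊆ Icc 2 n := by
  intro x hx
  simp only [largeValues, mem_filter, mem_image] at hx
  obtain ⟨⟨j, hj, rfl⟩, h2⟩ := hx
  exact mem_Icc.2 ⟨h2, (mem_Icc.1 (hv.1 j hj)).2⟩

theorem largeValues_eq_iff (hS : ∀ x ∈ S, 2 ≤ x) {ℓ : ℕ} {v : ℕ → ℕ} (hv : v ∈ Seqs ℓ n) :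
    largeValues ℓ v = S ↔
      (∀ j, v j ∈ insert 0 (insert 1 S)) ∧ ∀ x ∈ S, ∃ j ∈ Icc 1 ℓ, v j = x := by
  simp only [largeValues, Finset.ext_iff, mem_filter, mem_image, mem_insert]
  constructor
  · intro h
    refine ⟨fun j => ?_, fun x hx => ((h x).2 hx).1⟩
    by_cases hj : j ∈ Icc 1 ℓ
    · have := (mem_Icc.1 (hv.1 j hj)).1
      by_cases h2 : 2 ≤ v j
      · exact Or.inr (Or.inr ((h _).1 ⟨⟨j, hj, rfl⟩, h2⟩))
      · omega
    · exact Or.inl (hv.2 j hj)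
  · rintro ⟨hval, hcover⟩ x
    constructor
    · rintro ⟨⟨j, -, rfl⟩, h2⟩
      rcases hval j with h | h | h
      · omega
      · omega
      · exact h
    · exact fun hx => ⟨hcover x hx, hS x hx⟩

theorem comp_rankIn_mem_iff (hn : 1 ≤ n) (hS : S ⊆ Icc 2 n) {ℓ : ℕ} (J : Set ℕ) {v : ℕ → ℕ}
    (hv : ∀ j, v j ∈ insert 0 (insert 1 S)) :
    rankIn (insert 1 S) ∘ v ∈ {w ∈ Seqs ℓ (#S + 1) | Des ℓ w = J ∧
        (∀ l ∈ Icc 2 (#S + 1), ∃ j ∈ Icc 1 ℓ, w j = l) ∧ w ℓ ≠ 1} ↔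
      v ∈ Seqs ℓ n ∧ Des ℓ v = J ∧ (∀ x ∈ S, ∃ j ∈ Icc 1 ℓ, v j = x) ∧ v ℓ ≠ 1 := by
  set g := rankIn (insert 1 S)
  have hS2 : ∀ x ∈ S, 2 ≤ x := fun x hx => (mem_Icc.1 (hS hx)).1
  have hg := bijOn_rankIn_insert_zero_insert_one hS2
  have hgS := bijOn_rankIn_insert_one hS2
  have hg0 : g 0 = 0 := rankIn_insert_one_zero hS2
  have hg1 : g 1 = 1 := rankIn_insert_one_one hS2
  have hgv : ∀ j, g (v j) ∈ insert 0 (Icc 1 (#S + 1)) := fun j => hg.mapsTo (hv j)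
  have hinj : ∀ j a, a ∈ insert 0 (insert 1 S) → (g (v j) = g a ↔ v j = a) :=
    fun j a ha => hg.injOn.eq_iff (hv j) ha
  have hseq : g ∘ v ∈ Seqs ℓ (#S + 1) ↔ v ∈ Seqs ℓ n := by
    have hzero : ∀ j, g (v j) = 0 ↔ v j = 0 := fun j => by rw [← hinj j 0 (by simp), hg0]
    rw [mem_Seqs_iff_of_le, mem_Seqs_iff_of_le]
    · simp only [Function.comp_apply, hzero]
    · intro j
      have h := hv j
      simp only [mem_insert] at h
      rcases h with h | h | h
      · omega
      · omega
      · exact (mem_Icc.1 (hS h)).2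
    · intro j
      rcases mem_insert.1 (hgv j) with h | h
      · simp [h]
      · exact (mem_Icc.1 h).2
  have hdes : Des ℓ (g ∘ v) = Des ℓ v :=
    Des_comp_of_strictMonoOn (rankIn_strictMonoOn _) fun j _ => hv j
  have hcover : (∀ l ∈ Icc 2 (#S + 1), ∃ j ∈ Icc 1 ℓ, g (v j) = l) ↔
      ∀ x ∈ S, ∃ j ∈ Icc 1 ℓ, v j = x := by
    have := hgS.forall (p := fun l => ∃ j ∈ Icc 1 ℓ, g (v j) = l)
    simp only [mem_coe] at this
    rw [this]
    exact forall₂_congr fun x hx =>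
      exists_congr fun j => and_congr_right fun _ => hinj j x (by simp [hx])
  have hlast : g (v ℓ) ≠ 1 ↔ v ℓ ≠ 1 := by
    rw [Ne, Ne, ← hinj ℓ 1 (by simp), hg1]
  simp only [Set.mem_ofPred_eq, Function.comp_apply] at hseq hdes ⊢
  rw [hseq, hdes, hcover, hlast]

theorem ncard_largeValues_fiber (hn : 1 ≤ n) (hS : S ⊆ Icc 2 n) (ℓ : ℕ) (J : Set ℕ) :
    {v ∈ {v ∈ Seqs ℓ n | Des ℓ v = J ∧ v ℓ ≠ 1} | largeValues ℓ v = S}.ncard =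
      {w ∈ Seqs ℓ (#S + 1) | Des ℓ w = J ∧
        (∀ l ∈ Icc 2 (#S + 1), ∃ j ∈ Icc 1 ℓ, w j = l) ∧ w ℓ ≠ 1}.ncard := by
  have hS2 : ∀ x ∈ S, 2 ≤ x := fun x hx => (mem_Icc.1 (hS hx)).1
  set F := fun v : ℕ → ℕ => rankIn (insert 1 S) ∘ v
  have hF := (bijOn_rankIn_insert_zero_insert_one hS2).comp_left (ι := ℕ)
  have hfiber : {v ∈ {v ∈ Seqs ℓ n | Des ℓ v = J ∧ v ℓ ≠ 1} | largeValues ℓ v = S} =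
      (Set.univ.pi fun _ => ↑(insert 0 (insert 1 S))) ∩ F ⁻¹' {w ∈ Seqs ℓ (#S + 1) |
        Des ℓ w = J ∧ (∀ l ∈ Icc 2 (#S + 1), ∃ j ∈ Icc 1 ℓ, w j = l) ∧ w ℓ ≠ 1} := by
    ext v
    simp only [Set.mem_inter_iff, Set.mem_univ_pi, Set.mem_preimage, Set.mem_ofPred_eq, F]
    constructor
    · rintro ⟨⟨hv, hdes, hlast⟩, hlarge⟩
      obtain ⟨hval, hcover⟩ := (largeValues_eq_iff hS2 hv).1 hlarge
      exact ⟨hval, (comp_rankIn_mem_iff hn hS J hval).2 ⟨hv, hdes, hcover, hlast⟩⟩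
    · rintro ⟨hval, hw⟩
      obtain ⟨hv, hdes, hcover, hlast⟩ := (comp_rankIn_mem_iff hn hS J hval).1 hw
      exact ⟨⟨hv, hdes, hlast⟩, (largeValues_eq_iff hS2 hv).2 ⟨hval, hcover⟩⟩
  rw [hfiber, ← (hF.injOn.mono Set.inter_subset_left).ncard_image, Set.image_inter_preimage,
    hF.image_eq, Set.inter_eq_right.2]
  intro w hw j _
  rw [mem_coe, mem_insert]
  by_cases hj : j ∈ Icc 1 ℓ
  · exact Or.inr (hw.1.1 j hj)
  · exact Or.inl (hw.1.2 j hj)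

end Relabel

theorem bcoef_eq_zero_of_lt {I : Finset ℕ} {i : ℕ} (h : I.sup id < i) : bcoef I i = 0 := by
  rw [bcoef, Set.ncard_eq_zero ((Seqs_finite _ _).sep _)]
  refine Set.eq_empty_of_forall_notMem fun v ⟨_, _, hcover, _⟩ => ?_
  have hsub : Icc 2 (i + 1) ⊆ (Icc 1 (I.sup id)).image v := fun l hl => by
    obtain ⟨j, hj, hvj⟩ := hcover l hl
    exact mem_image.2 ⟨j, hj, hvj⟩
  have := (card_le_card hsub).trans card_image_le
  simp only [Nat.card_Icc] at this
  omega

theorem stmt_11_general (I : Finset ℕ) (n : ℕ) (hn : 1 ≤ n) :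
    Ncount I n = ∑ i ∈ Finset.range (I.sup id + 1), bcoef I i * (n - 1).choose i := by
  rw [Ncount, Set.ncard_eq_sum_ncard_fiberwise ((Seqs_finite _ _).sep _)
      fun v hv => mem_powerset.2 (largeValues_subset (n := n) hv.1),
    sum_congr rfl fun S hS => ncard_largeValues_fiber hn (mem_powerset.1 hS) _ _]
  change ∑ S ∈ (Icc 2 n).powerset, bcoef I #S = _
  rw [sum_powerset_apply_card, Nat.card_Icc, show n + 1 - 2 = n - 1 by omega]
  simp only [smul_eq_mul, mul_comm ((n - 1).choose _)]
  refine sum_range_eq_sum_range_of_eq_zero (fun i hi => ?_) fun i hi => ?_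
  · rw [Nat.choose_eq_zero_of_lt (by omega), mul_zero]
  · rw [bcoef_eq_zero_of_lt (by omega), zero_mul]

/-- for every positive integer `n`,
`N(I,n) = Σ_{i=0}^{α_t} b_i(I) · C(n-1, i)`. -/
theorem stmt_11 (I : Finset ℕ) (hI : I.Nonempty) (hIpos : ∀ x ∈ I, 1 ≤ x)
    (n : ℕ) (hn : 1 ≤ n) :
    Ncount I n = ∑ i ∈ Finset.range (I.sup id + 1), bcoef I i * (n - 1).choose i :=
  stmt_11_general I n hn
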